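/- arXiv:math/9201233 — 2 statements merged into one kernel-verified Lean document; each statement's English description precedes it below -/
import Mathlib

section
/- Let X be a Banach space that contains no isomorphic copy of ℓ₁. If (x*_n) is a sequence in X* such that (x*_n) converges to 0 in the weak* topology and such that ⟨x*_n, x_n⟩ → 0 for every weakly null sequence (x_n) in X, then ‖x*_n‖ → 0. -/
/-!
If `‖x*_{n_k}‖ ≥ ε` along a subsequence, pick `u_k` in the unit ball with `|x*_{n_k} u_k| > ε / 2`.
By Rosenthal's `ℓ₁` theorem some subsequence of `(u_k)` is weakly Cauchy. Weak*-nullity lets us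
pair each `u_j` with a later `u_{b_j}` such that `x*_{n_{b_j}} u_j` is small; the differences
`u_{b_j} - u_j` are then weakly null, yet `x*_{n_{b_j}}` stays larger than `ε / 4` on them.

Rosenthal's theorem comes from his combinatorial dichotomy for the pointwise bounded functions
`g ↦ g (u_n)` on the dual unit ball: either a diagonal argument over rational pairs `q < r` gives
a pointwise convergent subsequence, or for some `q < r` the pairs `{g (u_n) < q}`, `{g (u_n) > r}`
contain a Boolean independent subsequence, built by splitting all current cells at a common
index while keeping every cell hereditarily oscillating. In the latter case, testing `∑ a_j u_j` against the
difference of two functionals realising the sign patterns of `a` gives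
`‖∑ a_j u_j‖ ≥ (r - q) / 2 · ∑ |a_j|`, an isomorphic copy of `ℓ₁`.
-/

open Filter Topology Set
open scoped lp

theorem exists_seq_of_forall_exists_succ {α : Type*} {P : ℕ → α → Prop} {R : ℕ → α → α → Prop}
    {a : α} (h₀ : P 0 a) (h : ∀ k a, P k a → ∃ b, P (k + 1) b ∧ R k a b) :
    ∃ f : ℕ → α, (∀ k, P k (f k)) ∧ ∀ k, R k (f k) (f (k + 1)) := by
  choose! g hgP hgR using h
  let f : ℕ → α := fun k => Nat.rec a g k
  have hf : ∀ k, P k (f k) := fun k => by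
    induction k with
    | zero => exact h₀
    | succ k ih => exact hgP k _ ih
  exact ⟨f, hf, fun k => hgR k _ (hf k)⟩

theorem Set.Infinite.inter_Ioi {N : Set ℕ} (hN : N.Infinite) (n : ℕ) : (N ∩ Ioi n).Infinite :=
  (hN.sdiff (finite_Iic n)).mono fun _ hm => ⟨hm.1, mem_Ioi.mpr (not_le.mp hm.2)⟩

theorem exists_infinite_homogeneous_of_refine {ι : Type*} [Finite ι] {P : ι → ℕ → Set ℕ → Prop}
    (hP : ∀ i n, Antitone (P i n)) {N : Set ℕ} (hN : N.Infinite)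
    (h : ∀ N₀ ⊆ N, N₀.Infinite → ∃ n ∈ N₀, ∃ i, ∃ N₁ ⊆ N₀ ∩ Ioi n, N₁.Infinite ∧ P i n N₁) :
    ∃ i, ∃ D ⊆ N, D.Infinite ∧ ∀ n ∈ D, P i n (D ∩ Ioi n) := by
  obtain ⟨Ns, hNs, hstep⟩ := exists_seq_of_forall_exists_succ
    (P := fun _ s => s ⊆ N ∧ s.Infinite) (R := fun _ s t => ∃ n ∈ s, ∃ i, t ⊆ s ∩ Ioi n ∧ P i n t)
    ⟨subset_rfl, hN⟩ fun _ s ⟨hsN, hs⟩ => by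
      obtain ⟨n, hn, i, t, hts, ht, hPt⟩ := h s hsN hs
      exact ⟨t, ⟨hts.trans (inter_subset_left.trans hsN), ht⟩, n, hn, i, hts, hPt⟩
  choose n hn i hsub hPi using hstep
  have hanti : Antitone Ns := antitone_nat_of_succ_le fun k => (hsub k).trans inter_subset_left
  have hmem_succ : ∀ {k j}, k < j → n j ∈ Ns (k + 1) := fun {_ j} hkj => hanti hkj (hn j)
  have hmono : StrictMono n := fun k j hkj => (hsub k (hmem_succ hkj)).2
  obtain ⟨i₀, hi₀⟩ := Finite.exists_infinite_fiber i
  refine ⟨i₀, n '' (i ⁻¹' {i₀}), ?_, (infinite_coe_iff.mp hi₀).image hmono.injective.injOn, ?_⟩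
  · rintro _ ⟨k, -, rfl⟩
    exact (hNs k).1 (hn k)
  · rintro _ ⟨k, hk, rfl⟩
    rw [mem_preimage, mem_singleton_iff] at hk
    refine hk ▸ hP (i k) (n k) ?_ (hPi k)
    rintro _ ⟨⟨j, -, rfl⟩, hj⟩
    exact hmem_succ (hmono.lt_iff_lt.mp hj)

namespace Rosenthal

variable {σ : Type*} (A B : ℕ → Set σ)

def Oscillates (N : Set ℕ) (x : σ) : Prop :=
  {n ∈ N | x ∈ A n}.Infinite ∧ {n ∈ N | x ∈ B n}.Infinite

def HereditarilyOscillating (N : Set ℕ) (S : Set σ) : Prop :=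
  ∀ N' ⊆ N, N'.Infinite → ∃ x ∈ S, Oscillates A B N' x

def IndependentPairs : Prop :=
  ∀ F G : Finset ℕ, Disjoint F G → ∃ x, (∀ j ∈ F, x ∈ A j) ∧ ∀ j ∈ G, x ∈ B j

variable {A B}

theorem Oscillates.mono {N N' : Set ℕ} {x : σ} (h : Oscillates A B N x) (hN : N ⊆ N') :
    Oscillates A B N' x :=
  ⟨h.1.mono fun _ hn => ⟨hN hn.1, hn.2⟩, h.2.mono fun _ hn => ⟨hN hn.1, hn.2⟩⟩

theorem Oscillates.inter_Ioi {N : Set ℕ} {x : σ} (h : Oscillates A B N x) (n : ℕ) :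
    Oscillates A B (N ∩ Ioi n) x :=
  ⟨(h.1.inter_Ioi n).mono fun _ hm => ⟨⟨hm.1.1, hm.2⟩, hm.1.2⟩,
    (h.2.inter_Ioi n).mono fun _ hm => ⟨⟨hm.1.1, hm.2⟩, hm.1.2⟩⟩

namespace HereditarilyOscillating

variable {N N' : Set ℕ} {S S' : Set σ}

theorem mono (h : HereditarilyOscillating A B N S) (hN : N' ⊆ N) (hS : S ⊆ S') :
    HereditarilyOscillating A B N' S' := fun N'' hN'' hinf => by
  obtain ⟨x, hx, hosc⟩ := h N'' (hN''.trans hN) hinf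
  exact ⟨x, hS hx, hosc⟩

theorem not_iff : ¬ HereditarilyOscillating A B N S ↔
    ∃ N' ⊆ N, N'.Infinite ∧ ∀ x ∈ S, ¬ Oscillates A B N' x := by
  simp [HereditarilyOscillating]

theorem nonempty (h : HereditarilyOscillating A B N S) (hN : N.Infinite) : S.Nonempty :=
  let ⟨x, hx, _⟩ := h N subset_rfl hN
  ⟨x, hx⟩

theorem exists_refinement {ι : Type*} [Finite ι] (hN : N.Infinite) {S : ι → Set σ}
    (hS : ∀ i, HereditarilyOscillating A B N (S i)) :
    ∃ n ∈ N, ∃ N' ⊆ N ∩ Ioi n, N'.Infinite ∧ ∀ i,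
      HereditarilyOscillating A B N' (S i ∩ A n) ∧ HereditarilyOscillating A B N' (S i ∩ B n) := by
  -- Otherwise every infinite `N₀ ⊆ N` has an `n ∈ N₀` and a tail `N₁` on which no point of some
  -- `S i ∩ A n` or `S i ∩ B n` oscillates. On a homogeneous `D`, a point of `S i` oscillating on `D`
  -- lies in the offending set for some `n ∈ D` and still oscillates on `D ∩ Ioi n`.
  by_contra hfail
  let C : Bool → ℕ → Set σ := fun c => bif c then A else B
  obtain ⟨⟨i, c⟩, D, hDN, hD, hDP⟩ := exists_infinite_homogeneous_of_refine
    (P := fun (p : ι × Bool) n N₁ => ∀ x ∈ S p.1 ∩ C p.2 n, ¬ Oscillates A B N₁ x)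
    (fun _ _ _ _ hN₂ hP x hx hosc => hP x hx (hosc.mono hN₂)) hN fun N₀ hN₀ hinf => by
      obtain ⟨n, hn⟩ := hinf.nonempty
      have : ∃ i c, ¬ HereditarilyOscillating A B (N₀ ∩ Ioi n) (S i ∩ C c n) := by
        by_contra! hall
        exact hfail ⟨n, hN₀ hn, N₀ ∩ Ioi n, inter_subset_inter_left _ hN₀, hinf.inter_Ioi n,
          fun i => ⟨hall i true, hall i false⟩⟩
      obtain ⟨i, c, hic⟩ := this
      obtain ⟨N₁, hN₁, hN₁inf, hno⟩ := not_iff.mp hic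
      exact ⟨n, hn, (i, c), N₁, hN₁, hN₁inf, hno⟩
  obtain ⟨x, hxS, hosc⟩ := hS i D hDN hD
  obtain ⟨n, hnD, hxn⟩ : ∃ n ∈ D, x ∈ C c n := by
    cases c
    · exact hosc.2.nonempty.imp fun _ h => h
    · exact hosc.1.nonempty.imp fun _ h => h
  exact hDP n hnD x ⟨hxS, hxn⟩ (hosc.inter_Ioi n)

end HereditarilyOscillating

variable (A B) in
def cell (m : ℕ → ℕ) (k : ℕ) (F : Finset ℕ) : Set σ :=
  {x | ∀ j < k, x ∈ if j ∈ F then A (m j) else B (m j)}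

theorem cell_congr {m m' : ℕ → ℕ} {k : ℕ} (h : ∀ j < k, m j = m' j) (F : Finset ℕ) :
    cell A B m k F = cell A B m' k F := by
  ext x
  exact forall₂_congr fun j hj => by rw [h j hj]

theorem cell_erase_inter_subset_cell_update (m : ℕ → ℕ) (k n : ℕ) (F : Finset ℕ) :
    cell A B m k (F.erase k) ∩ (if k ∈ F then A n else B n) ⊆
      cell A B (Function.update m k n) (k + 1) F := by
  rintro x ⟨hx, hxk⟩ j hj
  rcases (Nat.lt_succ_iff_lt_or_eq.mp hj) with hjk | rfl
  · simpa [Function.update_of_ne hjk.ne, hjk.ne] using hx j hjk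
  · simpa using hxk

namespace HereditarilyOscillating

theorem exists_cell_update {N : Set ℕ} (hN : N.Infinite) {m : ℕ → ℕ} {k : ℕ}
    (h : ∀ F ⊆ Finset.range k, HereditarilyOscillating A B N (cell A B m k F)) :
    ∃ n ∈ N, ∃ N' ⊆ N ∩ Ioi n, N'.Infinite ∧ ∀ F ⊆ Finset.range (k + 1),
      HereditarilyOscillating A B N' (cell A B (Function.update m k n) (k + 1) F) := by
  obtain ⟨n, hn, N', hN', hN'inf, hsplit⟩ := exists_refinement
    (S := fun F : {F : Finset ℕ // F ⊆ Finset.range k} => cell A B m k F) hN fun F => h F F.2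
  refine ⟨n, hn, N', hN', hN'inf, fun F hF => ?_⟩
  have hcell := hsplit ⟨F.erase k, Finset.subset_insert_iff.mp (Finset.range_add_one ▸ hF)⟩
  refine HereditarilyOscillating.mono ?_ subset_rfl (cell_erase_inter_subset_cell_update m k n F)
  split_ifs
  exacts [hcell.1, hcell.2]

theorem exists_strictMono_forall_cell {N : Set ℕ} (hN : N.Infinite)
    (h : HereditarilyOscillating A B N univ) :
    ∃ m : ℕ → ℕ, StrictMono m ∧ ∀ k, ∃ N' : Set ℕ, N'.Infinite ∧
      ∀ F ⊆ Finset.range k, HereditarilyOscillating A B N' (cell A B m k F) := by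
  obtain ⟨s, hs, hstep⟩ := exists_seq_of_forall_exists_succ
    (P := fun k (s : (ℕ → ℕ) × Set ℕ) => s.2.Infinite ∧ (∀ j < k, s.2 ⊆ Ioi (s.1 j)) ∧
      ∀ F ⊆ Finset.range k, HereditarilyOscillating A B s.2 (cell A B s.1 k F))
    (R := fun k s t => t.1 k ∈ s.2 ∧ ∀ j < k, t.1 j = s.1 j)
    (a := (0, N))
    ⟨hN, by simp, fun F _ => h.mono subset_rfl fun _ _ j hj => absurd hj j.not_lt_zero⟩
    fun k ⟨m, N⟩ ⟨hN, hlt, hcell⟩ => by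
      obtain ⟨n, hn, N', hN', hN'inf, hcell'⟩ := exists_cell_update hN hcell
      refine ⟨(Function.update m k n, N'), ⟨hN'inf, fun j hj => ?_, hcell'⟩, by simpa using hn,
        fun j hj => Function.update_of_ne hj.ne n m⟩
      rcases Nat.lt_succ_iff_lt_or_eq.mp hj with hjk | rfl
      · simpa [Function.update_of_ne hjk.ne] using hN'.trans (inter_subset_left.trans (hlt j hjk))
      · simpa using hN'.trans inter_subset_right
  let m : ℕ → ℕ := fun j => (s (j + 1)).1 j
  have hagree : ∀ k, ∀ j < k, (s k).1 j = m j := by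
    intro k
    induction k with
    | zero => simp
    | succ k ih =>
      intro j hj
      rcases Nat.lt_succ_iff_lt_or_eq.mp hj with hjk | rfl
      · rw [(hstep k).2 j hjk, ih j hjk]
      · rfl
  refine ⟨m, strictMono_nat_of_lt_succ fun j => ?_, fun k => ⟨(s k).2, (hs k).1, fun F hF => ?_⟩⟩
  · have := (hs (j + 1)).2.1 j (Nat.lt_succ_self j) (hstep (j + 1)).1
    rwa [hagree (j + 1) j (Nat.lt_succ_self j)] at this
  · rw [← cell_congr (hagree k)]
    exact (hs k).2.2 F hF

theorem exists_strictMono_independentPairs {N : Set ℕ} (hN : N.Infinite)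
    (h : HereditarilyOscillating A B N univ) :
    ∃ m : ℕ → ℕ, StrictMono m ∧ IndependentPairs (A ∘ m) (B ∘ m) := by
  obtain ⟨m, hm, hcell⟩ := exists_strictMono_forall_cell hN h
  refine ⟨m, hm, fun F G hFG => ?_⟩
  obtain ⟨k, hk⟩ := Finset.exists_nat_subset_range (F ∪ G)
  obtain ⟨N', hN', hN'cell⟩ := hcell k
  obtain ⟨x, hx⟩ := (hN'cell F (Finset.union_subset_left hk)).nonempty hN'
  refine ⟨x, fun j hj => ?_, fun j hj => ?_⟩
  · simpa [hj] using hx j (Finset.mem_range.mp (hk (Finset.mem_union_left G hj)))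
  · simpa [Finset.disjoint_right.mp hFG hj] using
      hx j (Finset.mem_range.mp (hk (Finset.mem_union_right F hj)))

end HereditarilyOscillating

theorem exists_subseq_tendsto_or_hereditarilyOscillating (v : ℕ → σ → ℝ)
    (hv : ∀ x, ∃ C, ∀ n, |v n x| ≤ C) :
    (∃ φ : ℕ → ℕ, StrictMono φ ∧ ∀ x, ∃ L, Tendsto (fun j => v (φ j) x) atTop (𝓝 L)) ∨
      ∃ q r : ℝ, q < r ∧ ∃ N : Set ℕ, N.Infinite ∧
        HereditarilyOscillating (fun n => {x | v n x < q}) (fun n => {x | r < v n x}) N univ := by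
  -- Refine `ℕ` successively against an enumeration `e` of the rational pairs `q < r`. Along the
  -- diagonal subsequence no `v · x` crosses a rational pair infinitely often, so it converges.
  refine or_iff_not_imp_right.mpr fun hno => ?_
  push Not at hno
  have : Nonempty {p : ℚ × ℚ // p.1 < p.2} := ⟨⟨(0, 1), zero_lt_one⟩⟩
  obtain ⟨e, he⟩ := exists_surjective_nat {p : ℚ × ℚ // p.1 < p.2}
  obtain ⟨Ns, hNs, hstep⟩ := exists_seq_of_forall_exists_succ (P := fun _ N => N.Infinite)
    (R := fun i N N' => N' ⊆ N ∧ ∀ x, ¬ Oscillates (fun n => {x | v n x < (e i).1.1})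
      (fun n => {x | (e i).1.2 < v n x}) N' x)
    infinite_univ fun i N hN => by
      obtain ⟨N', hN', hN'inf, hno'⟩ :=
        HereditarilyOscillating.not_iff.mp (hno (e i).1.1 (e i).1.2 (mod_cast (e i).2) N hN)
      exact ⟨N', hN'inf, hN', fun x => hno' x (mem_univ x)⟩
  have hanti : Antitone Ns := antitone_nat_of_succ_le fun i => (hstep i).1
  obtain ⟨d, hd, hdmem⟩ := extraction_forall_of_frequently fun i =>
    Nat.frequently_atTop_iff_infinite.mpr (hNs i)
  refine ⟨d, hd, fun x => ?_⟩
  obtain ⟨C, hC⟩ := hv x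
  refine tendsto_of_no_upcrossings Rat.denseRange_cast ?_
    (isBoundedUnder_of ⟨C, fun j => (le_abs_self _).trans (hC _)⟩)
    (isBoundedUnder_of ⟨-C, fun j => neg_le_of_abs_le (hC _)⟩)
  rintro _ ⟨q, rfl⟩ _ ⟨r, rfl⟩ hqr ⟨hq, hr⟩
  obtain ⟨i, hi⟩ := he ⟨(q, r), mod_cast hqr⟩
  have hlate : ∀ p : ℝ → Prop, (∃ᶠ j in atTop, p (v (d j) x)) →
      {n ∈ Ns (i + 1) | p (v n x)}.Infinite := fun p hp =>
    ((Nat.frequently_atTop_iff_infinite.mp (hp.and_eventually (eventually_ge_atTop (i + 1)))).image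
      hd.injective.injOn).mono (by rintro _ ⟨j, ⟨hj, hji⟩, rfl⟩; exact ⟨hanti hji (hdmem j), hj⟩)
  have hno' := (hstep i).2 x
  rw [hi] at hno'
  exact hno' ⟨hlate (· < (q : ℝ)) hq, hlate ((r : ℝ) < ·) hr⟩

theorem exists_subseq_tendsto_or_independentPairs (v : ℕ → σ → ℝ)
    (hv : ∀ x, ∃ C, ∀ n, |v n x| ≤ C) :
    (∃ φ : ℕ → ℕ, StrictMono φ ∧ ∀ x, ∃ L, Tendsto (fun j => v (φ j) x) atTop (𝓝 L)) ∨
      ∃ q r : ℝ, q < r ∧ ∃ m : ℕ → ℕ, StrictMono m ∧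
        IndependentPairs (fun j => {x | v (m j) x < q}) (fun j => {x | r < v (m j) x}) := by
  refine (exists_subseq_tendsto_or_hereditarilyOscillating v hv).imp_right ?_
  rintro ⟨q, r, hqr, N, hN, h⟩
  exact ⟨q, r, hqr, h.exists_strictMono_independentPairs hN⟩

end Rosenthal

theorem lp.hasSum_norm_one {α E : Type*} [NormedAddCommGroup E] (f : ℓ¹(α, E)) :
    HasSum (fun i => ‖f i‖) ‖f‖ := by
  simpa using lp.hasSum_norm (p := 1) (by norm_num) f

theorem Filter.Tendsto.extend_of_strictMono {β : Type*} [Zero β] [TopologicalSpace β]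
    {g : ℕ → β} (hg : Tendsto g atTop (𝓝 0)) {ψ : ℕ → ℕ} (hψ : StrictMono ψ) :
    Tendsto (Function.extend ψ g 0) atTop (𝓝 0) := fun U hU => by
  obtain ⟨K, hK⟩ := eventually_atTop.mp (hg hU)
  refine mem_atTop_sets.mpr ⟨ψ K, fun n hn => ?_⟩
  by_cases h : ∃ k, ψ k = n
  · obtain ⟨k, rfl⟩ := h
    rw [mem_preimage, hψ.injective.extend_apply]
    exact hK k (hψ.le_iff_le.mp hn)
  · rw [mem_preimage, Function.extend_apply' _ _ _ h]
    exact mem_of_mem_nhds hU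

section Banach

variable {X : Type*} [NormedAddCommGroup X] [NormedSpace ℝ X]

variable (X) in
def ContainsL1 : Prop :=
  ∃ (J : ℓ¹(ℕ, ℝ) →L[ℝ] X) (c : ℝ), 0 < c ∧ ∀ a : ℓ¹(ℕ, ℝ), c * ‖a‖ ≤ ‖J a‖

theorem exists_clm_hasSum_smul [CompleteSpace X] {u : ℕ → X} {C : ℝ} (hu : ∀ j, ‖u j‖ ≤ C) :
    ∃ J : ℓ¹(ℕ, ℝ) →L[ℝ] X, ∀ a, HasSum (fun j => a j • u j) (J a) := by
  have hbound (a : ℓ¹(ℕ, ℝ)) (j : ℕ) : ‖a j • u j‖ ≤ ‖a j‖ * C := by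
    rw [norm_smul]
    exact mul_le_mul_of_nonneg_left (hu j) (norm_nonneg _)
  have hs (a : ℓ¹(ℕ, ℝ)) : Summable fun j => a j • u j :=
    .of_norm_bounded ((lp.hasSum_norm_one a).summable.mul_right C) (hbound a)
  let J : ℓ¹(ℕ, ℝ) →ₗ[ℝ] X :=
    { toFun a := ∑' j, a j • u j
      map_add' a b := by
        simp only [lp.coeFn_add, Pi.add_apply, add_smul]
        exact (hs a).tsum_add (hs b)
      map_smul' c a := by
        simp only [lp.coeFn_smul, Pi.smul_apply, smul_eq_mul, mul_smul]
        exact (hs a).tsum_const_smul c }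
  refine ⟨J.mkContinuous C fun a => ?_, fun a => (hs a).hasSum⟩
  rw [mul_comm]
  exact tsum_of_norm_bounded ((lp.hasSum_norm_one a).mul_right C) (hbound a)

theorem mul_sum_abs_le_two_mul_norm_sum_smul {u : ℕ → X} {q r : ℝ}
    (hind : Rosenthal.IndependentPairs (fun j => {g : {g : X →L[ℝ] ℝ // ‖g‖ ≤ 1} | g.1 (u j) < q})
      (fun j => {g | r < g.1 (u j)}))
    (a : ℕ → ℝ) (s : Finset ℕ) :
    (r - q) * ∑ j ∈ s, |a j| ≤ 2 * ‖∑ j ∈ s, a j • u j‖ := by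
  classical
  have hdisj := Finset.disjoint_filter_filter_not s s (0 ≤ a ·)
  obtain ⟨g₁, hg₁F, hg₁G⟩ := hind _ _ hdisj.symm
  obtain ⟨g₂, hg₂F, hg₂G⟩ := hind _ _ hdisj
  have hterm : ∀ j ∈ s, (r - q) * |a j| ≤ a j * (g₁.1 - g₂.1) (u j) := by
    intro j hj
    rw [sub_apply]
    by_cases ha : 0 ≤ a j
    · have h₁ : r < g₁.1 (u j) := hg₁G j (Finset.mem_filter.mpr ⟨hj, ha⟩)
      have h₂ : g₂.1 (u j) < q := hg₂F j (Finset.mem_filter.mpr ⟨hj, ha⟩)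
      rw [abs_of_nonneg ha]
      nlinarith
    · have h₁ : g₁.1 (u j) < q := hg₁F j (Finset.mem_filter.mpr ⟨hj, ha⟩)
      have h₂ : r < g₂.1 (u j) := hg₂G j (Finset.mem_filter.mpr ⟨hj, ha⟩)
      rw [abs_of_neg (not_le.mp ha)]
      nlinarith
  have hnorm : ‖g₁.1 - g₂.1‖ ≤ 2 := (norm_sub_le _ _).trans (by linarith [g₁.2, g₂.2])
  calc (r - q) * ∑ j ∈ s, |a j| ≤ ∑ j ∈ s, a j * (g₁.1 - g₂.1) (u j) := by
        rw [Finset.mul_sum]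
        exact Finset.sum_le_sum hterm
    _ = (g₁.1 - g₂.1) (∑ j ∈ s, a j • u j) := by simp [map_sum, map_smul]
    _ ≤ ‖g₁.1 - g₂.1‖ * ‖∑ j ∈ s, a j • u j‖ := (le_abs_self _).trans ((g₁.1 - g₂.1).le_opNorm _)
    _ ≤ 2 * ‖∑ j ∈ s, a j • u j‖ := by gcongr

theorem containsL1_of_independentPairs [CompleteSpace X] {u : ℕ → X} {C : ℝ}
    (hu : ∀ j, ‖u j‖ ≤ C) {q r : ℝ} (hqr : q < r)
    (hind : Rosenthal.IndependentPairs (fun j => {g : {g : X →L[ℝ] ℝ // ‖g‖ ≤ 1} | g.1 (u j) < q})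
      (fun j => {g | r < g.1 (u j)})) :
    ContainsL1 X := by
  obtain ⟨J, hJ⟩ := exists_clm_hasSum_smul hu
  refine ⟨J, (r - q) / 2, by linarith, fun a => ?_⟩
  have hlim : (r - q) * ‖a‖ ≤ 2 * ‖J a‖ :=
    le_of_tendsto_of_tendsto' ((lp.hasSum_norm_one a).tendsto_sum_nat.const_mul (r - q))
      ((hJ a).tendsto_sum_nat.norm.const_mul 2)
      fun K => mul_sum_abs_le_two_mul_norm_sum_smul hind a (Finset.range K)
  linarith

theorem exists_subseq_forall_tendsto_of_not_containsL1 [CompleteSpace X] (hX : ¬ ContainsL1 X)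
    {u : ℕ → X} {C : ℝ} (hu : ∀ n, ‖u n‖ ≤ C) :
    ∃ φ : ℕ → ℕ, StrictMono φ ∧
      ∀ f : X →L[ℝ] ℝ, ∃ L, Tendsto (fun j => f (u (φ j))) atTop (𝓝 L) := by
  rcases Rosenthal.exists_subseq_tendsto_or_independentPairs
    (fun n (g : {g : X →L[ℝ] ℝ // ‖g‖ ≤ 1}) => g.1 (u n))
    (fun g => ⟨C, fun n => ((g.1.le_opNorm _).trans
      (mul_le_of_le_one_left (norm_nonneg _) g.2)).trans (hu n)⟩)
    with ⟨φ, hφ, hconv⟩ | ⟨q, r, hqr, m, -, hind⟩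
  · refine ⟨φ, hφ, fun f => ?_⟩
    have hc : 0 < ‖f‖ + 1 := by positivity
    obtain ⟨L, hL⟩ := hconv ⟨(‖f‖ + 1)⁻¹ • f, by
      rw [norm_smul, norm_inv, Real.norm_of_nonneg hc.le, inv_mul_le_one₀ hc]
      linarith⟩
    refine ⟨(‖f‖ + 1) * L, ?_⟩
    convert hL.const_mul (‖f‖ + 1) using 2 with j
    simp [hc.ne']
  · exact (hX (containsL1_of_independentPairs (fun j => hu (m j)) hqr hind)).elim

theorem tendsto_apply_subseq_of_forall_weaklyNull {xs : ℕ → X →L[ℝ] ℝ}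
    (hpair : ∀ x : ℕ → X, (∀ f : X →L[ℝ] ℝ, Tendsto (fun n => f (x n)) atTop (𝓝 0)) →
      Tendsto (fun n => xs n (x n)) atTop (𝓝 0))
    {ψ : ℕ → ℕ} (hψ : StrictMono ψ) {y : ℕ → X}
    (hy : ∀ f : X →L[ℝ] ℝ, Tendsto (fun k => f (y k)) atTop (𝓝 0)) :
    Tendsto (fun k => xs (ψ k) (y k)) atTop (𝓝 0) := by
  have hx : ∀ f : X →L[ℝ] ℝ, Tendsto (fun n => f (Function.extend ψ y 0 n)) atTop (𝓝 0) := by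
    intro f
    convert (hy f).extend_of_strictMono hψ using 2 with n
    simp [Function.apply_extend f, Function.comp_def, Pi.zero_def]
  simpa [Function.comp_def, hψ.injective.extend_apply] using (hpair _ hx).comp hψ.tendsto_atTop

end Banach

/-- Let `X` be a Banach space containing no isomorphic copy of `ℓ₁`.  If `(x*_n)` is a
sequence in `X*` which is weak*-null and satisfies `⟨x*_n, x_n⟩ → 0` for every weakly null
sequence `(x_n)` in `X`, then `‖x*_n‖ → 0`. -/
theorem norm_null_of_weakStar_null_of_no_l1
    (X : Type*) [NormedAddCommGroup X] [NormedSpace ℝ X] [CompleteSpace X]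
    (hX : ¬ ∃ (J : lp (fun _ : ℕ => ℝ) 1 →L[ℝ] X) (c : ℝ),
        0 < c ∧ ∀ a : lp (fun _ : ℕ => ℝ) 1, c * ‖a‖ ≤ ‖J a‖)
    (xs : ℕ → (X →L[ℝ] ℝ))
    (hweakStar : ∀ x : X, Tendsto (fun n => xs n x) atTop (𝓝 0))
    (hpair : ∀ x : ℕ → X,
        (∀ f : X →L[ℝ] ℝ, Tendsto (fun n => f (x n)) atTop (𝓝 0)) →
        Tendsto (fun n => xs n (x n)) atTop (𝓝 0)) :
    Tendsto (fun n => ‖xs n‖) atTop (𝓝 0) := by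
  by_contra hnot
  obtain ⟨ε, hε, hfreq⟩ : ∃ ε > 0, ∃ᶠ n in atTop, ε ≤ ‖xs n‖ := by
    by_contra! h
    exact hnot (tendsto_order.2 ⟨fun a ha => .of_forall fun n => ha.trans_le (norm_nonneg _), h⟩)
  obtain ⟨n, hn, hbig⟩ := extraction_of_frequently_atTop hfreq
  choose u hu hnorming using fun k =>
    (xs (n k)).exists_lt_apply_of_lt_opNorm ((half_lt_self hε).trans_le (hbig k))
  obtain ⟨φ, hφ, hconv⟩ := exists_subseq_forall_tendsto_of_not_containsL1 hX fun k => (hu k).le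
  have hball : Metric.ball (0 : ℝ) (ε / 4) ∈ 𝓝 0 := Metric.ball_mem_nhds 0 (by positivity)
  obtain ⟨b, hb, hsmall⟩ := extraction_forall_of_eventually fun j =>
    ((hweakStar (u (φ j))).comp (hn.comp hφ).tendsto_atTop).eventually hball
  have hnull : ∀ f : X →L[ℝ] ℝ, Tendsto (fun j => f (u (φ (b j)) - u (φ j))) atTop (𝓝 0) := by
    intro f
    obtain ⟨L, hL⟩ := hconv f
    simpa using (hL.comp hb.tendsto_atTop).sub hL
  obtain ⟨j, hj⟩ := ((tendsto_apply_subseq_of_forall_weaklyNull hpair (hn.comp (hφ.comp hb))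
    hnull).eventually hball).exists
  have hsmallj := hsmall j
  simp only [Function.comp_apply, dist_zero_right, map_sub] at hj hsmallj
  linarith [hnorming (φ (b j)), norm_sub_norm_le (xs (n (φ (b j))) (u (φ (b j))))
    (xs (n (φ (b j))) (u (φ j)))]
end

section
/- Let X be a Banach space and let J : ℓ₁ → X be a continuous linear map that is bounded below (an isomorphic embedding), and write e_n for the image under J of the n-th unit vector of ℓ₁. Then there exists a bounded linear operator T : X → L∞[0,1] such that T(e_n) = r_n for every n, where r_n is the n-th Rademacher function. -/
open MeasureTheory Filter Topology

/-- The `n`-th Rademacher function (indexed so that `rademacher n` is `r_{n+1}`,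
where `r_k t = (-1) ^ ⌊2 ^ k * t⌋`). -/
noncomputable def rademacher (n : ℕ) : ℝ → ℝ := fun t => (-1 : ℝ) ^ ⌊(2 : ℝ) ^ (n + 1) * t⌋

theorem rademacher_measurable (n : ℕ) : Measurable (rademacher n) := by
  have h : Measurable fun t : ℝ => ⌊(2 : ℝ) ^ (n + 1) * t⌋ :=
    (measurable_const.mul measurable_id).floor
  exact (measurable_from_top (f := fun k : ℤ => (-1 : ℝ) ^ k)).comp h

theorem rademacher_memℒp (n : ℕ) :
    MemLp (rademacher n) ⊤ (volume.restrict (Set.Icc (0 : ℝ) 1)) := by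
  refine memLp_top_of_bound (rademacher_measurable n).aestronglyMeasurable 1 ?_
  filter_upwards with t
  simp [rademacher, norm_zpow]

/-- The `n`-th Rademacher function as an element of `L∞[0,1]`. -/
noncomputable def rademacherLinfty (n : ℕ) :
    Lp ℝ ⊤ (volume.restrict (Set.Icc (0 : ℝ) 1)) :=
  (rademacher_memℒp n).toLp (rademacher n)

/-!
Hahn–Banach through the embedding `J` gives, for every `t`, a functional `Ψ t` on `X` of norm
at most `1 / c` with `Ψ t (e n) = r_n t`. The choice `t ↦ Ψ t` need not be measurable, so it is
frozen on the dyadic intervals of length `2⁻ᵏ`: this gives operators `X → L∞[0,1]` of norm at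
most `1 / c` that send `e n` to `r_n` once `k > n`. A weak (ultrafilter) limit of them in
`L²[0,1]` is still bounded by `‖x‖ / c` almost everywhere, so it is the required operator.
-/

open scoped ENNReal InnerProductSpace

lemma abs_rademacher (n : ℕ) (t : ℝ) : |rademacher n t| = 1 := by
  simp [rademacher, abs_zpow]

lemma rademacher_dyadic_floor {n k : ℕ} (hnk : n < k) (t : ℝ) :
    rademacher n (⌊(2 : ℝ) ^ k * t⌋ / 2 ^ k) = rademacher n t := by
  obtain ⟨d, rfl⟩ := Nat.exists_eq_add_of_lt hnk
  have h2d : (2 : ℝ) ^ (n + d + 1) = 2 ^ (n + 1) * (2 ^ d : ℕ) := by push_cast; ring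
  have hlhs : (2 : ℝ) ^ (n + 1) * (⌊2 ^ (n + d + 1) * t⌋ / 2 ^ (n + d + 1)) =
      (⌊(2 : ℝ) ^ (n + d + 1) * t⌋ : ℝ) / (2 ^ d : ℕ) := by
    rw [h2d]; field_simp
  have hrhs : (2 : ℝ) ^ (n + 1) * t = 2 ^ (n + d + 1) * t / (2 ^ d : ℕ) := by
    rw [h2d]; field_simp
  simp only [rademacher]
  rw [hlhs, hrhs, Int.floor_div_natCast, Int.floor_div_natCast, Int.floor_intCast]

lemma exists_lp_one_dual_apply_single (s : ℕ → ℝ) (hs : ∀ m, |s m| ≤ 1) :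
    ∃ f : lp (fun _ : ℕ => ℝ) 1 →L[ℝ] ℝ, ‖f‖ ≤ 1 ∧ ∀ n, f (lp.single 1 n 1) = s n := by
  have hsum (a : lp (fun _ : ℕ => ℝ) 1) : Summable fun m => ‖a m‖ := by
    simpa using a.2.summable
  have hle (a : lp (fun _ : ℕ => ℝ) 1) (m : ℕ) : ‖s m * a m‖ ≤ ‖a m‖ := by
    rw [norm_mul, Real.norm_eq_abs (s m)]
    exact mul_le_of_le_one_left (norm_nonneg _) (hs m)
  have hsum' (a : lp (fun _ : ℕ => ℝ) 1) : Summable fun m => s m * a m :=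
    .of_norm_bounded (hsum a) (hle a)
  refine ⟨LinearMap.mkContinuous
    { toFun := fun a => ∑' m, s m * a m
      map_add' := fun a b => by
        simp only [lp.coeFn_add, Pi.add_apply, mul_add]
        exact (hsum' a).tsum_add (hsum' b)
      map_smul' := fun r a => by
        simp only [lp.coeFn_smul, Pi.smul_apply, smul_eq_mul, RingHom.id_apply, mul_left_comm _ r]
        exact (hsum' a).tsum_mul_left r } 1 fun a => ?_,
    LinearMap.mkContinuous_norm_le _ zero_le_one _, fun n => ?_⟩
  · have hnorm : ‖a‖ = ∑' m, ‖a m‖ := by simp [lp.norm_eq_tsum_rpow (p := 1) (by norm_num)]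
    calc ‖∑' m, s m * a m‖ ≤ ∑' m, ‖s m * a m‖ := norm_tsum_le_tsum_norm (hsum' a).norm
      _ ≤ ∑' m, ‖a m‖ := (hsum' a).norm.tsum_le_tsum (hle a) (hsum a)
      _ = 1 * ‖a‖ := by rw [one_mul, hnorm]
  · classical
    change ∑' m, s m * (lp.single 1 n (1 : ℝ) : ℕ → ℝ) m = s n
    simp [lp.single_apply, Pi.single_apply]

section Extension

variable {E F : Type*} [NormedAddCommGroup E] [NormedSpace ℝ E] [NormedAddCommGroup F]
  [NormedSpace ℝ F]

theorem exists_extension_of_bounded_below (J : E →L[ℝ] F) {c : ℝ} (hc : 0 < c)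
    (hJ : ∀ a, c * ‖a‖ ≤ ‖J a‖) (f : E →L[ℝ] ℝ) :
    ∃ g : F →L[ℝ] ℝ, ‖g‖ ≤ c⁻¹ * ‖f‖ ∧ ∀ a, g (J a) = f a := by
  have hinj : Function.Injective J := by
    refine (injective_iff_map_eq_zero J).2 fun a ha => norm_le_zero_iff.1 ?_
    have := hJ a
    rw [ha, norm_zero] at this
    exact nonpos_of_mul_nonpos_right this hc
  set Jr := LinearEquiv.ofInjective (J : E →ₗ[ℝ] F) hinj
  have hbound (y : LinearMap.range (J : E →ₗ[ℝ] F)) : ‖f (Jr.symm y)‖ ≤ c⁻¹ * ‖f‖ * ‖y‖ := by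
    have hy : c * ‖Jr.symm y‖ ≤ ‖y‖ := by
      have hJy : J (Jr.symm y) = y := LinearEquiv.ofInjective_symm_apply (f := (J : E →ₗ[ℝ] F)) y
      have := hJ (Jr.symm y)
      rwa [hJy] at this
    calc ‖f (Jr.symm y)‖ ≤ ‖f‖ * ‖Jr.symm y‖ := f.le_opNorm _
      _ ≤ ‖f‖ * (c⁻¹ * ‖y‖) := by
          gcongr; rwa [← div_eq_inv_mul, le_div_iff₀' hc]
      _ = c⁻¹ * ‖f‖ * ‖y‖ := by ring
  obtain ⟨g, hg, hgnorm⟩ := exists_extension_norm_eq _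
    ((f.toLinearMap.comp Jr.symm.toLinearMap).mkContinuous _ hbound)
  refine ⟨g, hgnorm ▸ LinearMap.mkContinuous_norm_le _ (by positivity) _, fun a => ?_⟩
  rw [show J a = (Jr a : F) from rfl, hg]
  simp

theorem exists_dual_apply_image_single (J : lp (fun _ : ℕ => ℝ) 1 →L[ℝ] F) {c : ℝ} (hc : 0 < c)
    (hJ : ∀ a, c * ‖a‖ ≤ ‖J a‖) (s : ℕ → ℝ) (hs : ∀ m, |s m| ≤ 1) :
    ∃ g : F →L[ℝ] ℝ, ‖g‖ ≤ c⁻¹ ∧ ∀ n, g (J (lp.single 1 n 1)) = s n := by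
  obtain ⟨f, hf, hfs⟩ := exists_lp_one_dual_apply_single s hs
  obtain ⟨g, hg, hgJ⟩ := exists_extension_of_bounded_below J hc hJ f
  exact ⟨g, hg.trans (mul_le_of_le_one_right (by positivity) hf), fun n => (hgJ _).trans (hfs n)⟩

end Extension

section WeakLimits

variable {ι H : Type*} [NormedAddCommGroup H] [InnerProductSpace ℝ H] [CompleteSpace H]

theorem exists_tendsto_inner_of_norm_le (U : Ultrafilter ι) (v : ι → H) {C : ℝ}
    (hv : ∀ i, ‖v i‖ ≤ C) :
    ∃ w : H, ‖w‖ ≤ C ∧ ∀ g, Tendsto (fun i => ⟪v i, g⟫_ℝ) U (𝓝 ⟪w, g⟫_ℝ) := by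
  obtain ⟨i₀⟩ : Nonempty ι := nonempty_of_neBot U
  have hC : 0 ≤ C := (norm_nonneg _).trans (hv i₀)
  have hlim (g : H) : ∃ l ∈ Metric.closedBall (0 : ℝ) (C * ‖g‖),
      Tendsto (fun i => ⟪v i, g⟫_ℝ) U (𝓝 l) := by
    refine (isCompact_closedBall _ _).ultrafilter_le_nhds (U.map _) ?_
    rw [Ultrafilter.coe_map, le_principal_iff]
    refine mem_map.2 (univ_mem' fun i => ?_)
    rw [Set.mem_preimage, mem_closedBall_zero_iff, Real.norm_eq_abs]
    exact (abs_real_inner_le_norm _ _).trans (by gcongr; exact hv i)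
  choose ℓ hℓC hℓ using hlim
  let L := linearMapOfTendsto ℓ (fun i => (innerSL ℝ (v i) : H →ₗ[ℝ] ℝ)) (tendsto_pi_nhds.2 hℓ)
  have hL (g : H) : ‖L g‖ ≤ C * ‖g‖ := mem_closedBall_zero_iff.1 (hℓC g)
  refine ⟨(InnerProductSpace.toDual ℝ H).symm (L.mkContinuous C hL), ?_, fun g => ?_⟩
  · rw [LinearIsometryEquiv.norm_map]
    exact LinearMap.mkContinuous_norm_le _ hC _
  · rw [InnerProductSpace.toDual_symm_apply]
    exact hℓ g

variable {X : Type*} [NormedAddCommGroup X] [NormedSpace ℝ X]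

theorem exists_clm_tendsto_inner_of_norm_le (U : Ultrafilter ι) (F : ι → X →L[ℝ] H) {M : ℝ}
    (hF : ∀ i x, ‖F i x‖ ≤ M * ‖x‖) :
    ∃ T : X →L[ℝ] H, ∀ x g, Tendsto (fun i => ⟪F i x, g⟫_ℝ) U (𝓝 ⟪T x, g⟫_ℝ) := by
  choose T hTnorm hT using fun x => exists_tendsto_inner_of_norm_le U (fun i => F i x) (hF · x)
  have hadd (x y : X) : T (x + y) = T x + T y := ext_inner_right ℝ fun g => by
    refine tendsto_nhds_unique (hT (x + y) g) ?_
    simpa only [map_add, inner_add_left] using (hT x g).add (hT y g)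
  have hsmul (r : ℝ) (x : X) : T (r • x) = r • T x := ext_inner_right ℝ fun g => by
    refine tendsto_nhds_unique (hT (r • x) g) ?_
    simpa only [map_smul, real_inner_smul_left] using (hT x g).const_mul r
  exact ⟨LinearMap.mkContinuous ⟨⟨T, hadd⟩, hsmul⟩ M hTnorm, hT⟩

end WeakLimits

section AeBounds

variable {α : Type*} [MeasurableSpace α] {μ : Measure α} [IsFiniteMeasure μ]

theorem ae_norm_le_of_forall_norm_setIntegral_le {f : α → ℝ} (hf : Integrable f μ) {R : ℝ}
    (h : ∀ s, MeasurableSet s → μ s < ∞ → ‖∫ t in s, f t ∂μ‖ ≤ R * μ.real s) :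
    ∀ᵐ t ∂μ, ‖f t‖ ≤ R := by
  have hR : Integrable (fun _ => R) μ := integrable_const R
  have hle : f ≤ᵐ[μ] fun _ => R := ae_le_of_forall_setIntegral_le hf hR fun s hs hμs => by
    rw [setIntegral_const, smul_eq_mul, mul_comm]
    exact (le_abs_self _).trans (h s hs hμs)
  have hge : (fun _ => -R) ≤ᵐ[μ] f := ae_le_of_forall_setIntegral_le hR.neg hf fun s hs hμs => by
    rw [setIntegral_const, smul_eq_mul, mul_neg, neg_le, mul_comm]
    exact (neg_le_abs _).trans (h s hs hμs)
  filter_upwards [hle, hge] with t h₁ h₂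
  exact abs_le.2 ⟨h₂, h₁⟩

theorem ae_norm_le_of_tendsto_inner {ι : Type*} {l : Filter ι} [l.NeBot] {v : ι → Lp ℝ 2 μ}
    {w : Lp ℝ 2 μ} (hvw : ∀ g, Tendsto (fun i => ⟪v i, g⟫_ℝ) l (𝓝 ⟪w, g⟫_ℝ)) {R : ℝ}
    (hv : ∀ i, ∀ᵐ t ∂μ, ‖v i t‖ ≤ R) : ∀ᵐ t ∂μ, ‖w t‖ ≤ R := by
  refine ae_norm_le_of_forall_norm_setIntegral_le ((Lp.memLp w).integrable one_le_two)
    fun s hs hμs => ?_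
  have hint (f : Lp ℝ 2 μ) : ⟪f, indicatorConstLp 2 hs hμs.ne (1 : ℝ)⟫_ℝ = ∫ t in s, f t ∂μ := by
    rw [real_inner_comm, L2.inner_indicatorConstLp_one]
  have := hvw (indicatorConstLp 2 hs hμs.ne 1)
  simp only [hint] at this
  exact le_of_tendsto' this.norm fun i =>
    norm_setIntegral_le_of_norm_le_const_ae hμs (ae_restrict_of_ae (hv i))

end AeBounds

section ProbabilitySpace

variable {X : Type*} [NormedAddCommGroup X] [NormedSpace ℝ X]
variable {α : Type*} [MeasurableSpace α] {μ : Measure α} [IsProbabilityMeasure μ]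

theorem exists_clm_Lp_of_ae_bound {E : Type*} [NormedAddCommGroup E] [NormedSpace ℝ E]
    (p : ℝ≥0∞) [Fact (1 ≤ p)] (Φ : X → α → E) (hmeas : ∀ x, AEStronglyMeasurable (Φ x) μ)
    (hadd : ∀ x y, Φ (x + y) =ᵐ[μ] Φ x + Φ y) (hsmul : ∀ (r : ℝ) x, Φ (r • x) =ᵐ[μ] r • Φ x)
    {M : ℝ} (hbound : ∀ x, ∀ᵐ t ∂μ, ‖Φ x t‖ ≤ M * ‖x‖) :
    ∃ T : X →L[ℝ] Lp E p μ, ∀ x, ‖T x‖ ≤ M * ‖x‖ ∧ T x =ᵐ[μ] Φ x := by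
  have hmem (x : X) : MemLp (Φ x) p μ := .of_bound (hmeas x) _ (hbound x)
  let T : X →ₗ[ℝ] Lp E p μ :=
    { toFun x := (hmem x).toLp
      map_add' x y := by
        rw [← MemLp.toLp_add]; exact MemLp.toLp_congr _ _ (hadd x y)
      map_smul' r x := by
        rw [RingHom.id_apply, ← MemLp.toLp_const_smul]; exact MemLp.toLp_congr _ _ (hsmul r x) }
  have hT (x : X) : ‖T x‖ ≤ M * ‖x‖ := by
    have hb : ∀ᵐ t ∂μ, ‖T x t‖ ≤ M * ‖x‖ := by
      filter_upwards [(hmem x).coeFn_toLp, hbound x] with t ht hb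
      exact ht ▸ hb
    obtain ⟨t, ht⟩ := hb.exists
    have hM : 0 ≤ M * ‖x‖ := (norm_nonneg _).trans ht
    have huniv : measureUnivNNReal μ = 1 := by simp [measureUnivNNReal]
    simpa [huniv] using Lp.norm_le_of_ae_bound hM hb
  exact ⟨T.mkContinuous M hT, fun x => ⟨hT x, (hmem x).coeFn_toLp⟩⟩

theorem exists_clm_Linfty_of_eventually_ae_eq (φ : ℕ → α → X →L[ℝ] ℝ)
    (hmeas : ∀ k x, AEStronglyMeasurable (fun t => φ k t x) μ) {M : ℝ}
    (hφ : ∀ k t, ‖φ k t‖ ≤ M) :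
    ∃ T : X →L[ℝ] Lp ℝ ∞ μ,
      ∀ x f, (∀ᶠ k in atTop, (fun t => φ k t x) =ᵐ[μ] f) → T x =ᵐ[μ] f := by
  have hbound (k : ℕ) (x : X) : ∀ᵐ t ∂μ, ‖φ k t x‖ ≤ M * ‖x‖ :=
    .of_forall fun t => (φ k t).le_of_opNorm_le (hφ k t) x
  choose F hF using fun k => exists_clm_Lp_of_ae_bound 2 (fun x t => φ k t x) (hmeas k)
    (fun x y => .of_eq (funext fun t => map_add (φ k t) x y))
    (fun r x => .of_eq (funext fun t => map_smul (φ k t) r x)) (hbound k)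
  obtain ⟨T₂, hT₂⟩ := exists_clm_tendsto_inner_of_norm_le (.of atTop) F fun k x => (hF k x).1
  have hT₂bound (x : X) : ∀ᵐ t ∂μ, ‖T₂ x t‖ ≤ M * ‖x‖ := by
    refine ae_norm_le_of_tendsto_inner (hT₂ x) fun k => ?_
    filter_upwards [(hF k x).2, hbound k x] with t h₁ h₂
    rwa [h₁]
  obtain ⟨T, hT⟩ := exists_clm_Lp_of_ae_bound ∞ (fun x => T₂ x) (fun x => Lp.aestronglyMeasurable _)
    (fun x y => by rw [map_add]; exact Lp.coeFn_add _ _)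
    (fun r x => by rw [map_smul]; exact Lp.coeFn_smul _ _) hT₂bound
  refine ⟨T, fun x f hf => ?_⟩
  obtain ⟨k₀, hk₀⟩ := eventually_atTop.1 hf
  have hFk (k : ℕ) (hk : k₀ ≤ k) : F k x = F k₀ x :=
    Lp.ext ((hF k x).2.trans ((hk₀ k hk).trans ((hk₀ k₀ le_rfl).symm.trans (hF k₀ x).2.symm)))
  have hT₂x : T₂ x = F k₀ x := ext_inner_right ℝ fun g => by
    refine tendsto_nhds_unique (hT₂ x g) (tendsto_const_nhds.congr' ?_)
    exact ((eventually_ge_atTop k₀).mono fun k hk => by simp only [hFk k hk]).filter_mono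
      (Ultrafilter.of_le _)
  filter_upwards [(hT x).2, (hF k₀ x).2, hk₀ k₀ le_rfl] with t h₁ h₂ h₃
  rw [h₁, hT₂x, h₂, h₃]

end ProbabilitySpace

theorem exists_extension_to_Linfty_mapping_unitVectors_to_rademacher_general
    (X : Type*) [NormedAddCommGroup X] [NormedSpace ℝ X]
    (J : lp (fun _ : ℕ => ℝ) 1 →L[ℝ] X) (c : ℝ) (hc : 0 < c)
    (hJ : ∀ a : lp (fun _ : ℕ => ℝ) 1, c * ‖a‖ ≤ ‖J a‖)
    (e : ℕ → X) (he : ∀ n, e n = J (lp.single 1 n (1 : ℝ))) :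
    ∃ T : X →L[ℝ] Lp ℝ ⊤ (volume.restrict (Set.Icc (0 : ℝ) 1)),
      ∀ n, T (e n) = rademacherLinfty n := by
  have : IsProbabilityMeasure (volume.restrict (Set.Icc (0 : ℝ) 1)) := ⟨by simp⟩
  choose Ψ hΨnorm hΨe using fun t =>
    exists_dual_apply_image_single J hc hJ (rademacher · t) fun m => (abs_rademacher m t).le
  let φ (k : ℕ) (t : ℝ) : X →L[ℝ] ℝ := Ψ (⌊(2 : ℝ) ^ k * t⌋ / 2 ^ k)
  have hmeas (k : ℕ) (x : X) : Measurable fun t => φ k t x :=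
    (measurable_from_top (f := fun j : ℤ => Ψ (j / 2 ^ k) x)).comp
      (measurable_const.mul measurable_id).floor
  obtain ⟨T, hT⟩ := exists_clm_Linfty_of_eventually_ae_eq (μ := volume.restrict (Set.Icc 0 1)) φ
    (fun k x => (hmeas k x).aestronglyMeasurable) fun k t => hΨnorm _
  refine ⟨T, fun n => Lp.ext ?_⟩
  refine (hT (e n) (rademacher n) ?_).trans (rademacher_memℒp n).coeFn_toLp.symm
  filter_upwards [eventually_gt_atTop n] with k hk
  exact .of_eq (funext fun t => by simp only [φ, he, hΨe, rademacher_dyadic_floor hk])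

/-- **Injectivity of `L∞[0,1]`.**  If `J : ℓ₁ → X` is a continuous linear map bounded
below, with `e n = J (δ n)` the images of the unit vectors, then the operator
`δ n ↦ r_n` from `ℓ₁` into `L∞[0,1]` extends through `J`: there is a bounded linear
operator `T : X → L∞[0,1]` with `T (e n) = r_n` for every `n`. -/
theorem exists_extension_to_Linfty_mapping_unitVectors_to_rademacher
    (X : Type*) [NormedAddCommGroup X] [NormedSpace ℝ X] [CompleteSpace X]
    (J : lp (fun _ : ℕ => ℝ) 1 →L[ℝ] X) (c : ℝ) (hc : 0 < c)
    (hJ : ∀ a : lp (fun _ : ℕ => ℝ) 1, c * ‖a‖ ≤ ‖J a‖)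
    (e : ℕ → X) (he : ∀ n, e n = J (lp.single 1 n (1 : ℝ))) :
    ∃ T : X →L[ℝ] Lp ℝ ⊤ (volume.restrict (Set.Icc (0 : ℝ) 1)),
      ∀ n, T (e n) = rademacherLinfty n :=
  exists_extension_to_Linfty_mapping_unitVectors_to_rademacher_general X J c hc hJ e he
end
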